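/- (PAC-Bayes bound for control policies.) Let $\mathcal{E}$ be a measurable space of environments with probability measure $\mathcal{D}$, let $W$ be a measurable space of policy parameters with a prior probability measure $P_0$, and let $C : W \times \mathcal{E} \to [0,1]$ be a measurable cost function. Fix $\delta \in (0,1)$ and $N \in \mathbb{N}$, $N \geq 1$. Then with probability at least $1-\delta$ over the draw of i.i.d. samples $S = (E_1,\dots,E_N) \sim \mathcal{D}^N$, the following holds simultaneously for every probability measure $P$ on $W$: $\mathbb{E}_{E \sim \mathcal{D}}\,\mathbb{E}_{w \sim P}[C(w,E)] \leq \frac{1}{N}\sum_{i=1}^N \mathbb{E}_{w \sim P}[C(w,E_i)] + \sqrt{\frac{\KL(P\|P_0) + \log\frac{2\sqrt{N}}{\delta}}{2N}}$. -/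

import Mathlib

/-!
Hoeffding's lemma bounds, for each fixed parameter `w` and each slope `λ`, the exponential moment
of `λ·gap(w) - λ²/(8N)` by `1`, where `gap(w)` is the difference between the true and the
empirical cost of `w`. Averaging over a grid of `J ≈ √N` slopes keeps this moment bound, Markov's
inequality turns it into a `1 - δ` event for the prior average, and the Donsker–Varadhan change of
measure transfers it to every posterior at the price of `KL(P‖P₀)`. On that event the best grid
slope recovers the optimal `λ = 4N·gap` up to an error paid for by the factor `2√N` (`log J` for
the union over the grid, `N/(2J²)` for the discretisation).
-/

open MeasureTheory
open scoped ENNReal Classical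

noncomputable def klDiv {Ω : Type*} [MeasurableSpace Ω] (μ ν : Measure Ω) : ℝ≥0∞ :=
  if μ ≪ ν ∧ Integrable (fun x => Real.log (μ.rnDeriv ν x).toReal) μ then
    ENNReal.ofReal (∫ x, Real.log (μ.rnDeriv ν x).toReal ∂μ)
  else ∞

open Real ProbabilityTheory

section ChangeOfMeasure

variable {W : Type*} [MeasurableSpace W] {P P₀ : Measure W} [IsProbabilityMeasure P]
  [IsProbabilityMeasure P₀]

lemma integral_llr_nonneg (hac : P ≪ P₀) (hllr : Integrable (llr P P₀) P) :
    0 ≤ ∫ w, llr P P₀ w ∂P := by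
  simpa using InformationTheory.integral_llr_add_sub_measure_univ_nonneg hac hllr

/-- The Donsker–Varadhan change of measure. -/
lemma integral_le_integral_llr_add_log_integral_exp (hac : P ≪ P₀)
    (hllr : Integrable (llr P P₀) P) {f : W → ℝ} (hf : Integrable f P)
    (hef : Integrable (fun w => exp (f w)) P₀) :
    ∫ w, f w ∂P ≤ ∫ w, llr P P₀ w ∂P + log (∫ w, exp (f w) ∂P₀) := by
  have : IsProbabilityMeasure (P₀.tilted f) := isProbabilityMeasure_tilted hef
  have hac' : P ≪ P₀.tilted f := hac.trans (absolutelyContinuous_tilted hef)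
  have h := integral_llr_nonneg hac' (integrable_llr_tilted_right hac hf hllr hef)
  rw [integral_llr_tilted_right hac hf hef hllr] at h
  linarith

end ChangeOfMeasure

lemma one_sub_le_measure_lt_inv {Ω : Type*} [MeasurableSpace Ω] {μ : Measure Ω}
    [IsProbabilityMeasure μ] {G : Ω → ℝ≥0∞} (hG : AEMeasurable G μ) (hG1 : ∫⁻ x, G x ∂μ ≤ 1)
    (δ : ℝ≥0∞) : 1 - δ ≤ μ {x | G x < δ⁻¹} := by
  have hmarkov : μ {x | δ⁻¹ ≤ G x} ≤ δ := by
    have h := ENNReal.le_inv_iff_mul_le.mpr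
      ((mul_comm _ _).trans_le ((mul_meas_ge_le_lintegral₀ hG δ⁻¹).trans hG1))
    rwa [inv_inv] at h
  have hcover : 1 ≤ μ {x | G x < δ⁻¹} + μ {x | δ⁻¹ ≤ G x} := by
    rw [← measure_univ (μ := μ)]
    refine (measure_mono fun x _ => ?_).trans (measure_union_le _ _)
    exact (lt_or_ge (G x) δ⁻¹).imp id id
  calc 1 - δ ≤ 1 - μ {x | δ⁻¹ ≤ G x} := tsub_le_tsub_left hmarkov 1
    _ ≤ μ {x | G x < δ⁻¹} := tsub_le_iff_right.mpr hcover

lemma integrable_exp_of_abs_le {α : Type*} [MeasurableSpace α] {ν : Measure α}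
    [IsFiniteMeasure ν] {g : α → ℝ} (hg : Measurable g) {M : ℝ} (hgM : ∀ a, |g a| ≤ M) :
    Integrable (fun a => exp (g a)) ν :=
  .of_bound hg.exp.aestronglyMeasurable (exp M) (ae_of_all _ fun a => by
    rw [norm_of_nonneg (exp_pos _).le, exp_le_exp]; exact (le_abs_self _).trans (hgM a))

lemma ofReal_one_sub_le_measure_pacBayes {Ω W : Type*} [MeasurableSpace Ω] [MeasurableSpace W]
    (μ : Measure Ω) [IsProbabilityMeasure μ] (P₀ : Measure W) [IsProbabilityMeasure P₀]
    {f : W → Ω → ℝ} (hf : Measurable (Function.uncurry f)) {M : ℝ} (hfM : ∀ w x, |f w x| ≤ M)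
    (hmgf : ∀ w, ∫ x, exp (f w x) ∂μ ≤ 1) {δ : ℝ} (hδ : 0 < δ) :
    ENNReal.ofReal (1 - δ) ≤ μ {x | ∀ P : Measure W, IsProbabilityMeasure P → P ≪ P₀ →
      Integrable (llr P P₀) P → ∫ w, f w x ∂P ≤ ∫ w, llr P P₀ w ∂P + log δ⁻¹} := by
  have hexp_meas : Measurable fun p : Ω × W => ENNReal.ofReal (exp (f p.2 p.1)) :=
    (hf.comp measurable_swap).exp.ennreal_ofReal
  have hexp_int : ∀ x, Integrable (fun w => exp (f w x)) P₀ := fun x =>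
    integrable_exp_of_abs_le hf.of_uncurry_right (hfM · x)
  set G : Ω → ℝ≥0∞ := fun x => ∫⁻ w, ENNReal.ofReal (exp (f w x)) ∂P₀
  have hG1 : ∫⁻ x, G x ∂μ ≤ 1 := by
    rw [lintegral_lintegral_swap hexp_meas.aemeasurable]
    refine (lintegral_mono fun w => ?_).trans_eq (lintegral_one.trans measure_univ)
    rw [← ofReal_integral_eq_lintegral_ofReal
      (integrable_exp_of_abs_le hf.of_uncurry_left (hfM w)) (ae_of_all _ fun x => (exp_pos _).le)]
    exact ENNReal.ofReal_le_one.mpr (hmgf w)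
  have hG_eq : ∀ x, G x = ENNReal.ofReal (∫ w, exp (f w x) ∂P₀) := fun x =>
    (ofReal_integral_eq_lintegral_ofReal (hexp_int x) (ae_of_all _ fun w => (exp_pos _).le)).symm
  refine le_trans ?_ ((one_sub_le_measure_lt_inv hexp_meas.lintegral_prod_right'.aemeasurable
    hG1 (ENNReal.ofReal δ)).trans (measure_mono fun x hx P _ hac hllr => ?_))
  · rw [ENNReal.ofReal_sub _ hδ.le, ENNReal.ofReal_one]
  have hf_int : Integrable (fun w => f w x) P :=
    .of_bound hf.of_uncurry_right.aestronglyMeasurable M (ae_of_all _ (hfM · x))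
  refine (integral_le_integral_llr_add_log_integral_exp hac hllr hf_int (hexp_int x)).trans ?_
  gcongr
  · exact integral_exp_pos (hexp_int x)
  · rw [← ENNReal.ofReal_le_ofReal_iff (by positivity), ← hG_eq, ENNReal.ofReal_inv_of_pos hδ]
    exact hx.le

noncomputable def empiricalGap {𝓔 : Type*} [MeasurableSpace 𝓔] (D : Measure 𝓔) (X : 𝓔 → ℝ)
    {N : ℕ} (S : Fin N → 𝓔) : ℝ :=
  ∫ e, X e ∂D - (N : ℝ)⁻¹ * ∑ i, X (S i)

section EmpiricalGap

variable {𝓔 : Type*} [MeasurableSpace 𝓔] (D : Measure 𝓔) {N : ℕ}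

lemma measurable_empiricalGap {X : 𝓔 → ℝ} (hX : Measurable X) :
    Measurable fun S : Fin N → 𝓔 => empiricalGap D X S := by
  unfold empiricalGap
  fun_prop

lemma measurable_uncurry_empiricalGap [SFinite D] {W : Type*} [MeasurableSpace W]
    {C : W → 𝓔 → ℝ} (hC : Measurable (Function.uncurry C)) :
    Measurable (Function.uncurry fun w (S : Fin N → 𝓔) => empiricalGap D (C w) S) := by
  have hL : Measurable fun w => ∫ e, C w e ∂D :=
    (hC.stronglyMeasurable.integral_prod_right' (ν := D)).measurable
  exact (hL.comp measurable_fst).sub (measurable_const.mul (Finset.measurable_sum _ fun i _ =>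
    hC.comp (measurable_fst.prodMk ((measurable_pi_apply i).comp measurable_snd))))

lemma abs_empiricalGap_le [IsProbabilityMeasure D] {X : 𝓔 → ℝ} (hX : Measurable X) {a b : ℝ}
    (hXab : ∀ e, X e ∈ Set.Icc a b) (hN : N ≠ 0) (S : Fin N → 𝓔) :
    |empiricalGap D X S| ≤ b - a := by
  have hint : Integrable X D := .of_mem_Icc a b hX.aemeasurable (ae_of_all _ hXab)
  have hmean_a : a ≤ ∫ e, X e ∂D := by
    simpa using integral_mono (integrable_const a) hint fun e => (hXab e).1
  have hmean_b : ∫ e, X e ∂D ≤ b := by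
    simpa using integral_mono hint (integrable_const b) fun e => (hXab e).2
  have hN0 : (0 : ℝ) < N := by positivity
  have hemp_a : a ≤ (N : ℝ)⁻¹ * ∑ i, X (S i) := by
    rw [le_inv_mul_iff₀ hN0]
    simpa using Finset.sum_le_sum fun i (_ : i ∈ Finset.univ) => (hXab (S i)).1
  have hemp_b : (N : ℝ)⁻¹ * ∑ i, X (S i) ≤ b := by
    rw [inv_mul_le_iff₀ hN0]
    simpa [mul_comm] using Finset.sum_le_sum fun i (_ : i ∈ Finset.univ) => (hXab (S i)).2
  rw [empiricalGap, abs_le]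
  constructor <;> linarith

lemma integral_empiricalGap [IsFiniteMeasure D] {W : Type*} [MeasurableSpace W] (P : Measure W)
    [IsFiniteMeasure P] {C : W → 𝓔 → ℝ} (hC : Measurable (Function.uncurry C)) {M : ℝ}
    (hCM : ∀ w e, |C w e| ≤ M) (S : Fin N → 𝓔) :
    ∫ w, empiricalGap D (C w) S ∂P =
      ∫ e, ∫ w, C w e ∂P ∂D - (N : ℝ)⁻¹ * ∑ i, ∫ w, C w (S i) ∂P := by
  have hI : Integrable (Function.uncurry C) (P.prod D) :=
    .of_bound hC.aestronglyMeasurable M (ae_of_all _ fun p => hCM p.1 p.2)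
  have hCint : ∀ e, Integrable (fun w => C w e) P := fun e =>
    .of_bound hC.of_uncurry_right.aestronglyMeasurable M (ae_of_all _ (hCM · e))
  have hL : Integrable (fun w => ∫ e, C w e ∂D) P := hI.integral_prod_left
  simp only [empiricalGap]
  rw [integral_sub hL ((integrable_finsetSum _ fun i _ => hCint (S i)).const_mul _),
    integral_integral_swap hI, integral_const_mul, integral_finsetSum _ fun i _ => hCint (S i)]

lemma integral_exp_mul_empiricalGap_le [IsProbabilityMeasure D] {X : 𝓔 → ℝ} (hX : Measurable X)
    {a b : ℝ} (hXab : ∀ e, X e ∈ Set.Icc a b) (hN : N ≠ 0) (t : ℝ) :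
    ∫ S, exp (t * empiricalGap D X S) ∂(Measure.pi fun _ : Fin N => D) ≤
      exp (t ^ 2 * (b - a) ^ 2 / (8 * N)) := by
  set μ := Measure.pi fun _ : Fin N => D
  set Y : Fin N → (Fin N → 𝓔) → ℝ := fun i S => X (S i) - ∫ e, X e ∂D
  have hY : ∀ i ∈ Finset.univ, HasSubgaussianMGF (Y i) ((‖b - a‖₊ / 2) ^ 2) μ := fun i _ => by
    have hXc : HasSubgaussianMGF (fun e => X e - ∫ e, X e ∂D) ((‖b - a‖₊ / 2) ^ 2)
        (μ.map (Function.eval i)) := by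
      rw [(measurePreserving_eval (fun _ : Fin N => D) i).map_eq]
      exact hasSubgaussianMGF_of_mem_Icc hX.aemeasurable (ae_of_all _ hXab)
    exact hXc.of_map (measurable_pi_apply (X := fun _ : Fin N => 𝓔) i).aemeasurable
  have hindep : iIndepFun Y μ :=
    iIndepFun_pi (X := fun _ e => X e - ∫ e, X e ∂D) fun _ => (hX.sub_const _).aemeasurable
  have hmgf := (HasSubgaussianMGF.sum_of_iIndepFun hindep hY).mgf_le (-t / N)
  have hN' : (N : ℝ) ≠ 0 := Nat.cast_ne_zero.mpr hN
  convert hmgf using 2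
  · refine integral_congr_ae (ae_of_all _ fun S => ?_)
    simp only [empiricalGap, Y, Finset.sum_sub_distrib, Finset.sum_const, Finset.card_univ,
      Fintype.card_fin, nsmul_eq_mul]
    field_simp
    congr 1
    ring
  · simp only [Finset.sum_const, Finset.card_univ, Fintype.card_fin, nsmul_eq_mul]
    push_cast
    rw [Real.norm_eq_abs, div_pow, sq_abs]
    field_simp
    ring

end EmpiricalGap

noncomputable def logMeanExp (J : ℕ) (g : ℕ → ℝ) : ℝ :=
  log ((J : ℝ)⁻¹ * ∑ j ∈ Finset.range J, exp (g j))

section LogMeanExp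

variable {J : ℕ} {g : ℕ → ℝ}

lemma exp_logMeanExp (hJ : J ≠ 0) :
    exp (logMeanExp J g) = (J : ℝ)⁻¹ * ∑ j ∈ Finset.range J, exp (g j) :=
  exp_log (by have := Finset.nonempty_range_iff.mpr hJ; positivity)

lemma sub_log_le_logMeanExp {j : ℕ} (hj : j < J) : g j - log J ≤ logMeanExp J g := by
  have hJ : (0 : ℝ) < J := by exact_mod_cast (Nat.zero_lt_of_lt hj)
  rw [← exp_le_exp, exp_logMeanExp (Nat.ne_zero_of_lt hj), exp_sub, exp_log hJ, div_eq_inv_mul]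
  gcongr
  exact Finset.single_le_sum (fun j _ => (exp_pos (g j)).le) (Finset.mem_range.mpr hj)

lemma logMeanExp_le_of_forall_le (hJ : J ≠ 0) {b : ℝ} (hb : ∀ j < J, g j ≤ b) :
    logMeanExp J g ≤ b := by
  rw [← exp_le_exp, exp_logMeanExp hJ, inv_mul_le_iff₀ (by positivity)]
  calc ∑ j ∈ Finset.range J, exp (g j) ≤ ∑ _j ∈ Finset.range J, exp b :=
        Finset.sum_le_sum fun j hj => exp_le_exp.mpr (hb j (Finset.mem_range.mp hj))
    _ = J * exp b := by simp

lemma abs_logMeanExp_le (hJ : J ≠ 0) {M : ℝ} (hM : ∀ j < J, |g j| ≤ M) :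
    |logMeanExp J g| ≤ M + log J := by
  have hJ0 : 0 < J := Nat.pos_of_ne_zero hJ
  have hlogJ : 0 ≤ log J := log_natCast_nonneg J
  rw [abs_le]
  constructor
  · have := sub_log_le_logMeanExp (g := g) hJ0
    linarith [neg_abs_le (g 0), hM 0 hJ0]
  · linarith [logMeanExp_le_of_forall_le hJ fun j hj => (le_abs_self (g j)).trans (hM j hj)]

lemma integral_exp_logMeanExp_le_one {Ω : Type*} [MeasurableSpace Ω] {μ : Measure Ω}
    [IsProbabilityMeasure μ] (hJ : J ≠ 0) {φ : ℕ → Ω → ℝ}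
    (hφ : ∀ j < J, Integrable (fun x => exp (φ j x)) μ)
    (hφ1 : ∀ j < J, ∫ x, exp (φ j x) ∂μ ≤ 1) :
    ∫ x, exp (logMeanExp J fun j => φ j x) ∂μ ≤ 1 := by
  simp_rw [exp_logMeanExp hJ]
  rw [integral_const_mul, integral_finsetSum _ fun j hj => hφ j (Finset.mem_range.mp hj),
    inv_mul_le_iff₀ (by positivity)]
  calc ∑ j ∈ Finset.range J, ∫ x, exp (φ j x) ∂μ ≤ ∑ _j ∈ Finset.range J, (1 : ℝ) :=
        Finset.sum_le_sum fun j hj => hφ1 j (Finset.mem_range.mp hj)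
    _ = J * 1 := by simp

end LogMeanExp

lemma exists_sq_mem_Icc {N : ℕ} (hN : 1 ≤ N) : ∃ J : ℕ, J ^ 2 ∈ Set.Icc N (2 * N) := by
  set s := (N - 1).sqrt
  have hle : s ^ 2 ≤ N - 1 := Nat.sqrt_le' (N - 1)
  have hlt : N - 1 < (s + 1) ^ 2 := Nat.lt_succ_sqrt' (N - 1)
  have h2 : 2 * s ≤ s ^ 2 + 1 := by simpa using two_mul_le_add_sq s 1
  have hexpand : (s + 1) ^ 2 = s ^ 2 + 2 * s + 1 := by ring
  exact ⟨s + 1, by omega, by omega⟩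

lemma div_add_log_le_log_two_mul_sqrt {a b : ℝ} (ha : 1 ≤ a) (hb : 0 < b) (hab : a ≤ b ^ 2)
    (hba : b ^ 2 ≤ 2 * a) : a / (2 * b ^ 2) + log b ≤ log (2 * √a) := by
  have ha0 : 0 < a := by linarith
  set u := b ^ 2 / a with hu
  have hu1 : 1 ≤ u := (le_div_iff₀ ha0).mpr (by linarith)
  have hu2 : u ≤ 2 := (div_le_iff₀ ha0).mpr hba
  have hlog_b : log b = (log u + log a) / 2 := by
    rw [hu, log_div (by positivity) ha0.ne', log_pow]
    push_cast
    ring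
  have hlog_u : log u ≤ log 2 + u / 2 - 1 := by
    have h := log_le_sub_one_of_pos (show 0 < u / 2 by positivity)
    rw [log_div (by positivity) two_ne_zero] at h
    linarith
  have hfrac : a / (2 * b ^ 2) = 1 / (2 * u) := by
    rw [hu]
    field_simp
  have hquad : 1 / (2 * u) + u / 4 ≤ 3 / 4 := by
    rw [div_add_div _ _ (by positivity) (by positivity), div_le_div_iff₀ (by positivity)
      (by positivity)]
    nlinarith
  rw [log_mul two_ne_zero (by positivity), log_sqrt ha0.le, hfrac, hlog_b]
  linarith [log_two_gt_d9]

noncomputable def gridPoint (J j : ℕ) : ℝ := (j + 1 / 2) / J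

lemma gridPoint_nonneg (J j : ℕ) : 0 ≤ gridPoint J j := by
  unfold gridPoint
  positivity

lemma gridPoint_le_one {J j : ℕ} (hj : j < J) : gridPoint J j ≤ 1 := by
  have hjJ : (j : ℝ) + 1 ≤ J := by exact_mod_cast hj
  rw [gridPoint, div_le_one (by linarith [(j.cast_nonneg : (0 : ℝ) ≤ j)])]
  linarith

lemma exists_sq_sub_gridPoint_le {J : ℕ} (hJ : J ≠ 0) {t : ℝ} (ht0 : 0 < t) (ht1 : t ≤ 1) :
    ∃ j < J, (t - gridPoint J j) ^ 2 ≤ 1 / (4 * J ^ 2) := by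
  have hJ0 : (0 : ℝ) < J := by positivity
  set k := ⌈t * J⌉₊
  have hk1 : 1 ≤ k := Nat.one_le_ceil_iff.mpr (by positivity)
  have hkJ : k ≤ J := Nat.ceil_le.mpr (by nlinarith)
  have hk_le : t * J ≤ k := Nat.le_ceil _
  have hk_lt : (k : ℝ) < t * J + 1 := Nat.ceil_lt_add_one (by positivity)
  refine ⟨k - 1, by omega, ?_⟩
  have hdist : t - gridPoint J (k - 1) = (t * J - (k - 1 / 2)) / J := by
    rw [gridPoint, Nat.cast_sub hk1]
    field_simp
    ring
  have hsq : (t * J - (k - 1 / 2)) ^ 2 ≤ (1 / 2) ^ 2 := sq_le_sq' (by linarith) (by linarith)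
  rw [hdist, div_pow, div_le_div_iff₀ (by positivity) (by positivity)]
  nlinarith

lemma le_sqrt_of_forall_grid_le {N J : ℕ} (hN : 1 ≤ N) (hNJ : N ≤ J ^ 2) (hJN : J ^ 2 ≤ 2 * N)
    {t K : ℝ} (ht : t ≤ 1)
    (h : ∀ j < J, 2 * N * (2 * gridPoint J j * t - gridPoint J j ^ 2) - log J ≤ K) :
    t ≤ √((K + log (2 * √N)) / (2 * N)) := by
  rcases le_or_gt t 0 with ht0 | ht0
  · exact ht0.trans (sqrt_nonneg _)
  have hJ : J ≠ 0 := by rintro rfl; omega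
  have hN0 : (1 : ℝ) ≤ N := by exact_mod_cast hN
  obtain ⟨j, hj, hc⟩ := exists_sq_sub_gridPoint_le hJ ht0 ht
  have hdisc : 2 * N * (t - gridPoint J j) ^ 2 ≤ (N : ℝ) / (2 * J ^ 2) := by
    calc 2 * N * (t - gridPoint J j) ^ 2 ≤ 2 * N * (1 / (4 * J ^ 2) : ℝ) := by gcongr
      _ = N / (2 * J ^ 2) := by field_simp; ring
  have hgrid := div_add_log_le_log_two_mul_sqrt (b := J) hN0 (by positivity) (by exact_mod_cast hNJ)
    (by exact_mod_cast hJN)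
  have hsq : 2 * N * (2 * gridPoint J j * t - gridPoint J j ^ 2) =
      2 * N * t ^ 2 - 2 * N * (t - gridPoint J j) ^ 2 := by ring
  have hj' := h j hj
  rw [le_sqrt' ht0, le_div_iff₀ (by positivity)]
  linarith

/-- The log-mean over the grid of the Hoeffding exponents `λ x - λ² / (8N)` at the slopes
`λ = 4N c`, `c = gridPoint J j`. -/
noncomputable def gridMixture (N J : ℕ) (x : ℝ) : ℝ :=
  logMeanExp J fun j => 2 * N * (2 * gridPoint J j * x - gridPoint J j ^ 2)

section GridMixture

variable {N J : ℕ}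

lemma measurable_gridMixture (N J : ℕ) : Measurable (gridMixture N J) := by
  unfold gridMixture logMeanExp
  fun_prop

lemma abs_grid_exponent_le {j : ℕ} (hj : j < J) {x : ℝ} (hx : |x| ≤ 1) :
    |2 * N * (2 * gridPoint J j * x - gridPoint J j ^ 2)| ≤ 6 * (N : ℝ) := by
  have hc0 := gridPoint_nonneg J j
  have hc1 := gridPoint_le_one hj
  obtain ⟨hx1, hx2⟩ := abs_le.mp hx
  rw [abs_le]
  constructor <;> nlinarith [mul_nonneg hc0 (Nat.cast_nonneg (α := ℝ) N)]

lemma abs_gridMixture_le (hJ : J ≠ 0) {x : ℝ} (hx : |x| ≤ 1) :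
    |gridMixture N J x| ≤ 6 * N + log J :=
  abs_logMeanExp_le hJ fun _ hj => abs_grid_exponent_le hj hx

lemma integral_exp_gridMixture_empiricalGap_le_one {𝓔 : Type*} [MeasurableSpace 𝓔]
    (D : Measure 𝓔) [IsProbabilityMeasure D] {X : 𝓔 → ℝ} (hX : Measurable X)
    (hX01 : ∀ e, X e ∈ Set.Icc 0 1) (hN : N ≠ 0) (hJ : J ≠ 0) :
    ∫ S, exp (gridMixture N J (empiricalGap D X S)) ∂(Measure.pi fun _ : Fin N => D) ≤ 1 := by
  have hgap : ∀ S : Fin N → 𝓔, |empiricalGap D X S| ≤ 1 := fun S => by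
    simpa using abs_empiricalGap_le D hX hX01 hN S
  refine integral_exp_logMeanExp_le_one hJ (fun j hj => ?_) fun j hj => ?_
  · exact integrable_exp_of_abs_le (by have := measurable_empiricalGap D (N := N) hX; fun_prop)
      fun S => abs_grid_exponent_le hj (hgap S)
  set c := gridPoint J j
  calc ∫ S, exp (2 * N * (2 * c * empiricalGap D X S - c ^ 2)) ∂(Measure.pi fun _ : Fin N => D)
      = exp (-(2 * N * c ^ 2)) * ∫ S, exp (4 * N * c * empiricalGap D X S)
          ∂(Measure.pi fun _ : Fin N => D) := by
        rw [← integral_const_mul]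
        congr 1 with S
        rw [← exp_add]
        ring_nf
    _ ≤ exp (-(2 * N * c ^ 2)) * exp ((4 * N * c) ^ 2 * (1 - 0) ^ 2 / (8 * N)) := by
        gcongr
        exact integral_exp_mul_empiricalGap_le D hX hX01 hN _
    _ = 1 := by
        rw [← exp_add, exp_eq_one_iff]
        field_simp
        ring

lemma integral_le_sqrt_of_integral_gridMixture_le {W : Type*} [MeasurableSpace W]
    {P : Measure W} [IsProbabilityMeasure P] {φ : W → ℝ} (hφ : Measurable φ)
    (hφ1 : ∀ w, |φ w| ≤ 1) (hN : 1 ≤ N) (hNJ : N ≤ J ^ 2) (hJN : J ^ 2 ≤ 2 * N) {K : ℝ}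
    (hK : ∫ w, gridMixture N J (φ w) ∂P ≤ K) :
    ∫ w, φ w ∂P ≤ √((K + log (2 * √N)) / (2 * N)) := by
  have hJ : J ≠ 0 := by rintro rfl; omega
  have hφ_int : Integrable φ P := .of_bound hφ.aestronglyMeasurable 1 (ae_of_all _ hφ1)
  have hmix_int : Integrable (fun w => gridMixture N J (φ w)) P :=
    .of_bound ((measurable_gridMixture N J).comp hφ).aestronglyMeasurable _
      (ae_of_all _ fun w => abs_gridMixture_le hJ (hφ1 w))
  have hmean : ∫ w, φ w ∂P ≤ 1 := by
    have h := norm_integral_le_of_norm_le_const (μ := P) (f := φ) (ae_of_all _ hφ1)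
    simp only [Real.norm_eq_abs, probReal_univ, mul_one] at h
    exact (le_abs_self _).trans h
  refine le_sqrt_of_forall_grid_le hN hNJ hJN hmean fun j hj => le_trans ?_ hK
  set c := gridPoint J j
  have hlin_int : Integrable (fun w => 4 * N * c * φ w - (2 * N * c ^ 2 + log J)) P :=
    (hφ_int.const_mul _).sub (integrable_const _)
  have h := integral_mono hlin_int hmix_int fun w =>
    (le_of_eq (by ring)).trans (sub_log_le_logMeanExp (g := fun j =>
      2 * N * (2 * gridPoint J j * φ w - gridPoint J j ^ 2)) hj)
  rw [integral_sub (hφ_int.const_mul _) (integrable_const _), integral_const_mul,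
    integral_const, probReal_univ, one_smul] at h
  linarith

end GridMixture

lemma ofReal_le_ofReal_add_rpow_half {A B K ℓ : ℝ} {N : ℕ} (hN : N ≠ 0)
    (h : A - B ≤ √((K + ℓ) / (2 * N))) :
    ENNReal.ofReal A ≤
      ENNReal.ofReal B + ((ENNReal.ofReal K + ENNReal.ofReal ℓ) / (2 * N)) ^ (1 / 2 : ℝ) := by
  calc ENNReal.ofReal A ≤ ENNReal.ofReal B + ENNReal.ofReal (A - B) := by
        simpa using ENNReal.ofReal_add_le (p := B) (q := A - B)
    _ ≤ ENNReal.ofReal B + ENNReal.ofReal √((K + ℓ) / (2 * N)) := by gcongr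
    _ ≤ _ := by
      gcongr
      rcases le_or_gt (K + ℓ) 0 with hKℓ | hKℓ
      · rw [sqrt_eq_zero'.mpr (div_nonpos_of_nonpos_of_nonneg hKℓ (by positivity)),
          ENNReal.ofReal_zero]
        exact zero_le
      rw [sqrt_eq_rpow, ← ENNReal.ofReal_rpow_of_nonneg (by positivity) (by norm_num),
        ENNReal.ofReal_div_of_pos (by positivity)]
      gcongr
      · exact ENNReal.ofReal_add_le
      · simp

/-- **PAC-Bayes bound for control policies.**  With probability at least `1 - δ` over the
draw of `N` i.i.d. training environments `S ∼ D^N`, simultaneously for every posterior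
probability measure `P` on the policy-parameter space `W`,
`𝔼_{E∼D} 𝔼_{w∼P} [C w E] ≤ (1/N) ∑ i, 𝔼_{w∼P} [C w (S i)]
  + √((KL(P‖P₀) + log (2√N/δ)) / (2N))`,
where the right-hand side is interpreted in `ℝ≥0∞` (so it is `+∞` when `KL(P‖P₀) = +∞`). -/
theorem pac_bayes_control {𝓔 W : Type*} [MeasurableSpace 𝓔] [MeasurableSpace W]
    (D : Measure 𝓔) [IsProbabilityMeasure D]
    (P₀ : Measure W) [IsProbabilityMeasure P₀]
    (C : W → 𝓔 → ℝ) (hC : Measurable (Function.uncurry C))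
    (hC01 : ∀ w e, C w e ∈ Set.Icc (0 : ℝ) 1)
    (δ : ℝ) (hδ : δ ∈ Set.Ioo (0 : ℝ) 1) (N : ℕ) (hN : 1 ≤ N) :
    ENNReal.ofReal (1 - δ) ≤
      (Measure.pi fun _ : Fin N => D) {S : Fin N → 𝓔 |
        ∀ P : Measure W, IsProbabilityMeasure P →
          ENNReal.ofReal (∫ e, ∫ w, C w e ∂P ∂D) ≤
            ENNReal.ofReal ((N : ℝ)⁻¹ * ∑ i : Fin N, ∫ w, C w (S i) ∂P) +
              ((klDiv P P₀ + ENNReal.ofReal (Real.log (2 * Real.sqrt N / δ))) /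
                (2 * N)) ^ (1 / 2 : ℝ)} := by
  obtain ⟨hδ0, -⟩ := hδ
  have hN0 : N ≠ 0 := by omega
  obtain ⟨J, hNJ, hJN⟩ := exists_sq_mem_Icc hN
  have hJ : J ≠ 0 := by rintro rfl; omega
  have hCM : ∀ w e, |C w e| ≤ 1 := fun w e => abs_le.mpr ⟨by linarith [(hC01 w e).1], (hC01 w e).2⟩
  have hgap : ∀ w S, |empiricalGap D (C w) S| ≤ 1 := fun w S => by
    simpa using abs_empiricalGap_le D hC.of_uncurry_left (hC01 w) hN0 S
  refine (ofReal_one_sub_le_measure_pacBayes _ P₀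
    (f := fun w S => gridMixture N J (empiricalGap D (C w) S))
    ((measurable_gridMixture N J).comp (measurable_uncurry_empiricalGap D hC))
    (fun w S => abs_gridMixture_le hJ (hgap w S))
    (fun w => integral_exp_gridMixture_empiricalGap_le_one D hC.of_uncurry_left (hC01 w) hN0 hJ)
    hδ0).trans (measure_mono fun S hS P hP => ?_)
  by_cases hKL : P ≪ P₀ ∧ Integrable (llr P P₀) P
  · obtain ⟨hac, hllr⟩ := hKL
    rw [show klDiv P P₀ = ENNReal.ofReal (∫ w, llr P P₀ w ∂P) from if_pos ⟨hac, hllr⟩]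
    refine ofReal_le_ofReal_add_rpow_half hN0 ?_
    rw [← integral_empiricalGap D P hC hCM S]
    refine (integral_le_sqrt_of_integral_gridMixture_le
      (measurable_uncurry_empiricalGap D hC).of_uncurry_right (hgap · S) hN hNJ hJN
      (hS P hP hac hllr)).trans_eq ?_
    rw [log_div (by positivity) hδ0.ne', log_inv]
    ring_nf
  · rw [show klDiv P P₀ = ∞ from if_neg hKL, top_add,
      ENNReal.top_div_of_ne_top (by finiteness), ENNReal.top_rpow_of_pos (by norm_num)]
    exact le_top
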